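/- For n ≥ 3 agents, the assignment matrix produced by Probabilistic Serial admits a decomposition such that for every ordered pair of agents (i, i'), the probability that i envies i' is at most (n−2)/(n−1). -/

import Mathlib

/-- A doubly stochastic assignment matrix: nonnegative entries, each row and column sums to 1. -/
def DoublyStochastic (n : ℕ) (P : Fin n → Fin n → ℝ) : Prop :=
  (∀ i o, 0 ≤ P i o) ∧ (∀ i, ∑ o, P i o = 1) ∧ (∀ o, ∑ i, P i o = 1)

/-- SD-envy-freeness: `rank i o` is the position of object `o` in agent `i`'s strict
preference (smaller = more preferred). For all agents `i, i'` and objects `o`, the mass agent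
`i` gets on objects weakly preferred (by `i`) to `o` is at least the mass `i'` gets there. -/
def SDEF (n : ℕ) (rank : Fin n → Equiv.Perm (Fin n)) (P : Fin n → Fin n → ℝ) : Prop :=
  ∀ i i' o : Fin n,
    ∑ o' ∈ Finset.univ.filter (fun o' => rank i o' ≤ rank i o), P i' o' ≤
    ∑ o' ∈ Finset.univ.filter (fun o' => rank i o' ≤ rank i o), P i o'

/-- A decomposition of an assignment matrix: a probability distribution over deterministic
assignments (permutations `σ`, where `σ i` is the object of agent `i`) whose marginals are `P`. -/
def IsDecomposition (n : ℕ) (P : Fin n → Fin n → ℝ) (w : Equiv.Perm (Fin n) → ℝ) : Prop :=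
  (∀ σ, 0 ≤ w σ) ∧ (∑ σ, w σ = 1) ∧
  ∀ i o, ∑ σ ∈ Finset.univ.filter (fun σ : Equiv.Perm (Fin n) => σ i = o), w σ = P i o

/-- The probability, under the distribution `w` over deterministic assignments, that agent `i`
envies agent `i'` (i.e. strictly prefers `i'`'s object to her own). -/
def envyProb (n : ℕ) (rank : Fin n → Equiv.Perm (Fin n)) (w : Equiv.Perm (Fin n) → ℝ)
    (i i' : Fin n) : ℝ :=
  ∑ σ ∈ Finset.univ.filter (fun σ : Equiv.Perm (Fin n) => rank i (σ i') < rank i (σ i)), w σ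
/-- One run of the Probabilistic Serial (simultaneous eating) algorithm, implemented with a
step counter (\`fuel\`). State: the set \`avail\` of not-yet-exhausted objects and the remaining
fraction \`x o\` of each object. In each step every agent eats her most preferred available
object at unit speed; the step lasts until some object is exhausted; the fractions eaten are
accumulated. The matrix entry (i, o) is the total amount of object o eaten by agent i. -/
noncomputable def psAux (n : ℕ) (rank : Fin n → Equiv.Perm (Fin n)) :
    ℕ → Finset (Fin n) → (Fin n → ℝ) → Fin n → Fin n → ℝ
  | 0, _, _ => fun _ _ => 0
  | fuel + 1, avail, x =>
    if h : avail.Nonempty then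
      let fav : Fin n → Fin n := fun i =>
        (rank i).symm ((avail.image (rank i)).min' (h.image _))
      let rate : Fin n → ℕ := fun o => (Finset.univ.filter fun i => fav i = o).card
      let cands := avail.filter fun o => 0 < rate o
      if hc : cands.Nonempty then
        let T : ℝ := (cands.image fun o => x o / (rate o : ℝ)).min' (hc.image _)
        let newx : Fin n → ℝ := fun o => x o - T * (rate o : ℝ)
        fun i o => (if fav i = o then T else 0) +
          psAux n rank fuel (avail.filter fun o' => 0 < newx o') newx i o
      else fun _ _ => 0
    else fun _ _ => 0

/-- The assignment matrix produced by Probabilistic Serial: run the eating algorithm from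
full objects; at most n steps occur since each step exhausts at least one object. -/
noncomputable def psMatrix (n : ℕ) (rank : Fin n → Equiv.Perm (Fin n)) :
    Fin n → Fin n → ℝ :=
  psAux n rank n Finset.univ fun _ => 1


/-!
Run the eating algorithm up to the first step at which two agents' favourite remaining objects
differ. Before it, all agents eat the same objects in the same order, so each gets `1/n` of every
object of this common block `B`. At that step no object is eaten by all `n` agents, so the step
lasts at least `1/(n-1)`, and every agent `i` gets at least that much of her favourite object `o`
outside `B`. In any Birkhoff decomposition, `i` does not envy `i'` when she gets an object of
`B ∪ {o}` and `i'` one outside `B`; since `i` and `i'` get the same mass of `B`, this has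
probability at least `1/(n-1)`. If the favourites never differ, every agent gets `1/n` of every
object, and under the uniform distribution on permutations `i` envies `i'` with probability
`1/2 ≤ (n-2)/(n-1)`.
-/

open Finset

namespace PS

variable {n : ℕ} (rank : Fin n → Equiv.Perm (Fin n))

-- The `let`-bound quantities of one step of `psAux`.
noncomputable def fav (avail : Finset (Fin n)) (i : Fin n) : Fin n :=
  if h : avail.Nonempty then (rank i).symm ((avail.image (rank i)).min' (h.image _)) else i

noncomputable def rate (avail : Finset (Fin n)) (o : Fin n) : ℕ :=
  (univ.filter fun i => fav rank avail i = o).card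

noncomputable def cands (avail : Finset (Fin n)) : Finset (Fin n) :=
  avail.filter fun o => 0 < rate rank avail o

noncomputable def stepTime (avail : Finset (Fin n)) (x : Fin n → ℝ) : ℝ :=
  if hc : (cands rank avail).Nonempty then
    ((cands rank avail).image fun o => x o / (rate rank avail o : ℝ)).min' (hc.image _)
  else 0

noncomputable def remaining (avail : Finset (Fin n)) (x : Fin n → ℝ) (o : Fin n) : ℝ :=
  x o - stepTime rank avail x * rate rank avail o

noncomputable def nextAvail (avail : Finset (Fin n)) (x : Fin n → ℝ) : Finset (Fin n) :=
  avail.filter fun o => 0 < remaining rank avail x o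

variable {rank} {avail : Finset (Fin n)} {x : Fin n → ℝ}

lemma fav_mem (h : avail.Nonempty) (i : Fin n) : fav rank avail i ∈ avail := by
  obtain ⟨a, ha, hae⟩ := mem_image.1 ((avail.image (rank i)).min'_mem (h.image _))
  rw [fav, dif_pos h, ← hae, Equiv.symm_apply_apply]
  exact ha

lemma fav_le {a : Fin n} (ha : a ∈ avail) (i : Fin n) :
    rank i (fav rank avail i) ≤ rank i a := by
  rw [fav, dif_pos ⟨a, ha⟩, Equiv.apply_symm_apply]
  exact min'_le _ _ (mem_image_of_mem _ ha)

lemma fav_lt {a : Fin n} (ha : a ∈ avail) {i : Fin n} (hne : a ≠ fav rank avail i) :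
    rank i (fav rank avail i) < rank i a :=
  (fav_le ha i).lt_of_ne fun h => hne ((rank i).injective h).symm

lemma rate_eq_zero (h : avail.Nonempty) {o : Fin n} (ho : o ∉ avail) : rate rank avail o = 0 := by
  rw [rate, card_eq_zero, filter_eq_empty_iff]
  exact fun i _ hi => ho (hi ▸ fav_mem h i)

lemma sum_rate_eq (h : avail.Nonempty) : ∑ o ∈ avail, (rate rank avail o : ℝ) = n := by
  rw [sum_subset (subset_univ _) fun o _ ho => by simp [rate_eq_zero h ho]]
  exact_mod_cast (card_eq_sum_card_fiberwise fun i _ => mem_univ (fav rank avail i)).symm.trans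
    (card_fin n)

lemma cands_nonempty (h : avail.Nonempty) : (cands rank avail).Nonempty := by
  obtain ⟨a, -⟩ := id h
  exact ⟨fav rank avail a, mem_filter.2 ⟨fav_mem h a, card_pos.2 ⟨a, by simp⟩⟩⟩

lemma exists_stepTime_eq (h : avail.Nonempty) (x : Fin n → ℝ) :
    ∃ o ∈ cands rank avail, stepTime rank avail x = x o / rate rank avail o := by
  have hc := cands_nonempty (rank := rank) h
  obtain ⟨o, ho, hoe⟩ := mem_image.1 (min'_mem _ (hc.image fun o =>
    x o / (rate rank avail o : ℝ)))
  exact ⟨o, ho, by rw [stepTime, dif_pos hc, hoe]⟩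

lemma stepTime_le {o : Fin n} (ho : o ∈ cands rank avail) (x : Fin n → ℝ) :
    stepTime rank avail x ≤ x o / rate rank avail o := by
  rw [stepTime, dif_pos ⟨o, ho⟩]
  exact min'_le _ _ (mem_image_of_mem _ ho)

lemma stepTime_pos (h : avail.Nonempty) (hx : ∀ o ∈ avail, 0 < x o) :
    0 < stepTime rank avail x := by
  obtain ⟨o, ho, he⟩ := exists_stepTime_eq (rank := rank) h x
  obtain ⟨hoa, hr⟩ := mem_filter.1 ho
  rw [he]
  exact div_pos (hx o hoa) (by exact_mod_cast hr)

lemma remaining_nonneg (hx : ∀ o ∈ avail, 0 < x o) {o : Fin n} (ho : o ∈ avail) :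
    0 ≤ remaining rank avail x o := by
  rw [remaining, sub_nonneg]
  rcases (rate rank avail o).eq_zero_or_pos with hr | hr
  · simpa [hr] using (hx o ho).le
  · have hr' : (0 : ℝ) < rate rank avail o := by exact_mod_cast hr
    calc stepTime rank avail x * rate rank avail o
        ≤ x o / rate rank avail o * rate rank avail o := by
          gcongr
          exact stepTime_le (mem_filter.2 ⟨ho, hr⟩) x
      _ = x o := div_mul_cancel₀ _ hr'.ne'

lemma remaining_eq_zero (hx : ∀ o ∈ avail, 0 < x o) {o : Fin n} (ho : o ∈ avail)
    (hno : o ∉ nextAvail rank avail x) : remaining rank avail x o = 0 :=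
  (remaining_nonneg hx ho).antisymm' (not_lt.1 fun hpos => hno (mem_filter.2 ⟨ho, hpos⟩))

lemma nextAvail_subset : nextAvail rank avail x ⊆ avail := filter_subset _ _

lemma card_nextAvail_lt (h : avail.Nonempty) : (nextAvail rank avail x).card < avail.card := by
  obtain ⟨o, ho, he⟩ := exists_stepTime_eq (rank := rank) h x
  have hr : (rate rank avail o : ℝ) ≠ 0 := by exact_mod_cast (mem_filter.1 ho).2.ne'
  refine card_lt_card (filter_ssubset.2 ⟨o, (mem_filter.1 ho).1, ?_⟩)
  simp [remaining, he, div_mul_cancel₀ _ hr]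

variable (rank) in
lemma psAux_succ (fuel : ℕ) (h : avail.Nonempty) (x : Fin n → ℝ) (i o : Fin n) :
    psAux n rank (fuel + 1) avail x i o =
      (if fav rank avail i = o then stepTime rank avail x else 0) +
        psAux n rank fuel (nextAvail rank avail x) (remaining rank avail x) i o := by
  have hc := cands_nonempty (rank := rank) h
  simp only [cands, rate, fav, dif_pos h] at hc
  rw [psAux, dif_pos h]
  dsimp only
  rw [dif_pos hc]
  unfold nextAvail remaining
  simp only [stepTime, cands, rate, fav, dif_pos h, dif_pos hc]

variable (rank) in
lemma psAux_succ_empty (fuel : ℕ) (x : Fin n → ℝ) : psAux n rank (fuel + 1) ∅ x = 0 := by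
  rw [psAux, dif_neg Finset.not_nonempty_empty]
  rfl

lemma psAux_eq_zero_of_notMem (fuel : ℕ) {o : Fin n} (ho : o ∉ avail) (i : Fin n) :
    psAux n rank fuel avail x i o = 0 := by
  induction fuel generalizing avail x with
  | zero => rfl
  | succ fuel ih =>
    rcases avail.eq_empty_or_nonempty with rfl | h
    · rw [psAux_succ_empty]; rfl
    · rw [psAux_succ rank fuel h, if_neg fun hi : fav rank avail i = o => ho (hi ▸ fav_mem h i),
        zero_add]
      exact ih fun hno => ho (nextAvail_subset hno)

lemma psAux_nonneg (fuel : ℕ) (hx : ∀ o ∈ avail, 0 < x o) (i o : Fin n) :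
    0 ≤ psAux n rank fuel avail x i o := by
  induction fuel generalizing avail x with
  | zero => rfl
  | succ fuel ih =>
    rcases avail.eq_empty_or_nonempty with rfl | h
    · rw [psAux_succ_empty]; rfl
    · rw [psAux_succ rank fuel h]
      refine add_nonneg ?_ (ih fun o ho => (mem_filter.1 ho).2)
      split_ifs
      exacts [(stepTime_pos h hx).le, le_rfl]

-- Every agent eats at unit speed while the total remaining mass shrinks at speed `n`.
lemma sum_psAux_row {fuel : ℕ} (hcard : avail.card ≤ fuel) (hx : ∀ o ∈ avail, 0 < x o)
    (i : Fin n) : ∑ o, psAux n rank fuel avail x i o = (∑ o ∈ avail, x o) / n := by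
  induction fuel generalizing avail x with
  | zero => simp [card_eq_zero.1 (Nat.le_zero.1 hcard), psAux]
  | succ fuel ih =>
    rcases avail.eq_empty_or_nonempty with rfl | h
    · simp [psAux_succ_empty]
    have hn : (n : ℝ) ≠ 0 := by
      obtain ⟨a, -⟩ := h
      exact_mod_cast a.pos.ne'
    have hnext : ∑ o ∈ nextAvail rank avail x, remaining rank avail x o
        = ∑ o ∈ avail, x o - stepTime rank avail x * n := by
      rw [sum_subset nextAvail_subset fun o ho hno => remaining_eq_zero hx ho hno]
      simp only [remaining, sum_sub_distrib, ← mul_sum, sum_rate_eq h]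
    simp only [psAux_succ rank fuel h]
    rw [sum_add_distrib, sum_ite_eq, if_pos (mem_univ _),
      ih (Nat.lt_succ_iff.1 ((card_nextAvail_lt h).trans_le hcard))
        fun o ho => (mem_filter.1 ho).2, hnext]
    field_simp
    ring

lemma sum_psAux_col {fuel : ℕ} (hcard : avail.card ≤ fuel) (hx : ∀ o ∈ avail, 0 < x o)
    (o : Fin n) : ∑ i, psAux n rank fuel avail x i o = if o ∈ avail then x o else 0 := by
  induction fuel generalizing avail x with
  | zero => simp [card_eq_zero.1 (Nat.le_zero.1 hcard), psAux]
  | succ fuel ih =>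
    rcases avail.eq_empty_or_nonempty with rfl | h
    · simp [psAux_succ_empty]
    have heaten : ∑ i, (if fav rank avail i = o then stepTime rank avail x else 0)
        = rate rank avail o * stepTime rank avail x := by
      rw [← sum_filter, sum_const, nsmul_eq_mul, rate]
    simp only [psAux_succ rank fuel h]
    rw [sum_add_distrib, heaten,
      ih (Nat.lt_succ_iff.1 ((card_nextAvail_lt h).trans_le hcard))
        fun o ho => (mem_filter.1 ho).2]
    by_cases ho : o ∈ avail
    · by_cases hno : o ∈ nextAvail rank avail x
      · simp only [if_pos ho, if_pos hno, remaining]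
        ring
      · have hzero := remaining_eq_zero hx ho hno
        simp only [remaining] at hzero
        simp only [if_pos ho, if_neg hno]
        linarith
    · have hno : o ∉ nextAvail rank avail x := fun h' => ho (nextAvail_subset h')
      simp [ho, hno, rate_eq_zero h ho]

variable (rank) in
theorem psMatrix_mem_doublyStochastic :
    Matrix.of (psMatrix n rank) ∈ doublyStochastic ℝ (Fin n) := by
  have hx : ∀ o ∈ (univ : Finset (Fin n)), (0 : ℝ) < 1 := fun _ _ => one_pos
  have hcard : (univ : Finset (Fin n)).card ≤ n := by simp
  refine mem_doublyStochastic_iff_sum.2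
    ⟨fun i o => psAux_nonneg n hx i o, fun i => ?_, fun o => ?_⟩
  · have hn : (n : ℝ) ≠ 0 := by exact_mod_cast i.pos.ne'
    simp [psMatrix, sum_psAux_row hcard hx i, hn]
  · simp [psMatrix, sum_psAux_col hcard hx o]

-- `B` is the set of objects eaten before the first step at which two favourites differ.
def IsCommonPrefix (rank : Fin n → Equiv.Perm (Fin n)) (P : Fin n → Fin n → ℝ)
    (avail B : Finset (Fin n)) : Prop :=
  B ⊆ avail ∧ (avail \ B).Nonempty ∧
    (∀ i, ∀ b ∈ B, ∀ a ∈ avail \ B, rank i b < rank i a) ∧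
    (∀ i, ∀ b ∈ B, P i b = 1 / n) ∧
    ∀ i, 1 / ((n : ℝ) - 1) ≤ P i (fav rank (avail \ B) i)

lemma psAux_succ_of_fav_eq (fuel : ℕ) (hx : ∀ o ∈ avail, x o = 1) {o : Fin n}
    (ho : o ∈ avail) (hfav : ∀ i, fav rank avail i = o) (i o' : Fin n) :
    psAux n rank (fuel + 1) avail x i o' = (if o = o' then (1 / n : ℝ) else 0) +
      psAux n rank fuel (avail.erase o) (Function.update x o 0) i o' := by
  have h : avail.Nonempty := ⟨o, ho⟩
  have hrate : ∀ o', rate rank avail o' = if o = o' then n else 0 := fun o' => by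
    by_cases ho' : o = o' <;> simp [rate, hfav, ho']
  have hT : stepTime rank avail x = 1 / n := by
    obtain ⟨o', ho', he⟩ := exists_stepTime_eq (rank := rank) h x
    obtain ⟨ho'a, hr⟩ := mem_filter.1 ho'
    have hoo' : o = o' := by_contra fun hne => by simp [hrate, hne] at hr
    rw [he, ← hoo', hrate, if_pos rfl, hx o ho]
  have hrem : remaining rank avail x = Function.update x o 0 := funext fun o' => by
    by_cases ho' : o' = o
    · subst ho'
      have hn : (n : ℝ) ≠ 0 := by exact_mod_cast o'.pos.ne'
      simp [remaining, hrate, hT, hx o' ho, hn]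
    · simp [remaining, hrate, Ne.symm ho', ho']
  have hnext : nextAvail rank avail x = avail.erase o := by
    ext o'
    by_cases ho' : o' = o
    · simp [nextAvail, hrem, ho']
    · simp +contextual [nextAvail, hrem, ho', hx]
  rw [psAux_succ rank fuel h, hfav, hT, hnext, hrem]

lemma one_div_le_stepTime (h : avail.Nonempty) (hx : ∀ o ∈ avail, x o = 1) {i₁ i₂ : Fin n}
    (hne : fav rank avail i₁ ≠ fav rank avail i₂) :
    1 / ((n : ℝ) - 1) ≤ stepTime rank avail x := by
  obtain ⟨o, ho, he⟩ := exists_stepTime_eq (rank := rank) h x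
  obtain ⟨hoa, hr⟩ := mem_filter.1 ho
  have hlt : rate rank avail o < n := by
    refine (card_lt_card (filter_ssubset.2 ?_)).trans_eq (card_fin n)
    by_cases h₁ : fav rank avail i₁ = o
    · exact ⟨i₂, mem_univ _, fun h₂ => hne (h₁.trans h₂.symm)⟩
    · exact ⟨i₁, mem_univ _, h₁⟩
  have hlt' : (rate rank avail o : ℝ) + 1 ≤ n := by exact_mod_cast hlt
  rw [he, hx o hoa]
  exact one_div_le_one_div_of_le (by exact_mod_cast hr) (by linarith)

lemma stepTime_le_psAux_fav (fuel : ℕ) (h : avail.Nonempty) (i : Fin n) :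
    stepTime rank avail x ≤ psAux n rank (fuel + 1) avail x i (fav rank avail i) := by
  rw [psAux_succ rank fuel h, if_pos rfl]
  exact le_add_of_nonneg_right (psAux_nonneg fuel (fun o ho => (mem_filter.1 ho).2) i _)

lemma IsCommonPrefix.insert_of_erase {P Q : Fin n → Fin n → ℝ} {o : Fin n}
    {B : Finset (Fin n)} (hP : IsCommonPrefix rank P (avail.erase o) B) (ho : o ∈ avail)
    (hfav : ∀ i, fav rank avail i = o)
    (hQ : ∀ i o', Q i o' = (if o = o' then (1 / n : ℝ) else 0) + P i o')
    (hPo : ∀ i, P i o = 0) : IsCommonPrefix rank Q avail (insert o B) := by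
  obtain ⟨hBsub, hne, htop, hB, hfavB⟩ := hP
  have hoB : o ∉ B := fun h => (mem_erase.1 (hBsub h)).1 rfl
  have hsd : avail \ insert o B = avail.erase o \ B := by
    rw [sdiff_insert, erase_sdiff_comm]
  refine ⟨insert_subset ho (hBsub.trans (erase_subset _ _)), hsd ▸ hne, ?_, ?_, ?_⟩
  · intro i b hb a ha
    rw [hsd] at ha
    rcases mem_insert.1 hb with rfl | hb
    · obtain ⟨hab, ha⟩ := mem_erase.1 (mem_sdiff.1 ha).1
      exact hfav i ▸ fav_lt ha (hfav i ▸ hab)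
    · exact htop i b hb a ha
  · intro i b hb
    rcases mem_insert.1 hb with rfl | hb
    · simp [hQ, hPo]
    · rw [hQ, if_neg (ne_of_mem_of_not_mem hb hoB).symm, hB i b hb, zero_add]
  · intro i
    have hmem := mem_sdiff.1 (fav_mem (rank := rank) hne i)
    rw [hsd, hQ, if_neg (ne_of_mem_erase hmem.1).symm, zero_add]
    exact hfavB i

theorem psAux_uniform_or_isCommonPrefix {fuel : ℕ} (hcard : avail.card ≤ fuel)
    (h : avail.Nonempty) (hx : ∀ o ∈ avail, x o = 1) :
    (∀ i, ∀ o ∈ avail, psAux n rank fuel avail x i o = 1 / n) ∨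
      ∃ B, IsCommonPrefix rank (psAux n rank fuel avail x) avail B := by
  induction fuel generalizing avail x with
  | zero => exact absurd (card_pos.2 h) (by omega)
  | succ fuel ih =>
    obtain ⟨a, -⟩ := id h
    by_cases hagree : ∀ i, fav rank avail i = fav rank avail a
    · set o := fav rank avail a
      have ho : o ∈ avail := fav_mem h a
      have hQ := psAux_succ_of_fav_eq fuel hx ho hagree
      have hPo : ∀ i, psAux n rank fuel (avail.erase o) (Function.update x o 0) i o = 0 :=
        psAux_eq_zero_of_notMem fuel (notMem_erase o avail)
      have hrest : (∀ i, ∀ o' ∈ avail.erase o,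
          psAux n rank fuel (avail.erase o) (Function.update x o 0) i o' = 1 / n) ∨
          ∃ B, IsCommonPrefix rank (psAux n rank fuel (avail.erase o) (Function.update x o 0))
            (avail.erase o) B := by
        rcases (avail.erase o).eq_empty_or_nonempty with he | hne
        · simp [he]
        refine ih (by rw [card_erase_of_mem ho]; omega) hne fun o' ho' => ?_
        rw [Function.update_of_ne (ne_of_mem_erase ho'), hx o' (mem_of_mem_erase ho')]
      rcases hrest with hunif | ⟨B, hB⟩
      · refine Or.inl fun i o' ho' => ?_
        rw [hQ]
        by_cases hoo' : o = o'
        · simp [← hoo', hPo]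
        · rw [if_neg hoo', hunif i o' (mem_erase.2 ⟨Ne.symm hoo', ho'⟩), zero_add]
      · exact Or.inr ⟨insert o B, hB.insert_of_erase ho hagree hQ hPo⟩
    · obtain ⟨i₁, hi₁⟩ := not_forall.1 hagree
      refine Or.inr ⟨∅, empty_subset _, by simpa using h, by simp, by simp, fun i => ?_⟩
      rw [sdiff_empty]
      exact (one_div_le_stepTime h hx hi₁).trans (stepTime_le_psAux_fav fuel h i)

variable (rank) in
theorem psMatrix_eq_uniform_or_isCommonPrefix (hn : 0 < n) :
    psMatrix n rank = (fun _ _ => (1 / n : ℝ)) ∨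
      ∃ B, IsCommonPrefix rank (psMatrix n rank) univ B := by
  refine (psAux_uniform_or_isCommonPrefix (fuel := n) (by simp) ⟨⟨0, hn⟩, mem_univ _⟩
    fun _ _ => rfl).imp (fun h => ?_) id
  exact funext₂ fun i o => h i o (mem_univ o)

end PS

section Decomposition

variable {n : ℕ} {P : Fin n → Fin n → ℝ} {w : Equiv.Perm (Fin n) → ℝ}

theorem exists_isDecomposition (hP : Matrix.of P ∈ doublyStochastic ℝ (Fin n)) :
    ∃ w, IsDecomposition n P w := by
  obtain ⟨w, hw0, hw1, hw⟩ := exists_eq_sum_perm_of_mem_doublyStochastic hP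
  refine ⟨w, hw0, hw1, fun i o => ?_⟩
  have hio := congrFun₂ hw i o
  simp only [Matrix.sum_apply, Matrix.smul_apply, smul_eq_mul, Equiv.Perm.permMatrix,
    PEquiv.toMatrix_apply, Equiv.toPEquiv_apply, Option.mem_def, Option.some.injEq,
    mul_ite, mul_one, mul_zero, Matrix.of_apply] at hio
  rw [sum_filter, ← hio]

lemma IsDecomposition.sum_filter_mem (hw : IsDecomposition n P w) (k : Fin n)
    (B : Finset (Fin n)) :
    ∑ σ ∈ univ.filter (fun σ : Equiv.Perm (Fin n) => σ k ∈ B), w σ =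
      ∑ b ∈ B, P k b := by
  rw [← sum_fiberwise_of_maps_to (g := fun σ => σ k) (t := B)
    (fun σ hσ => (mem_filter.1 hσ).2) w]
  refine sum_congr rfl fun b hb => ?_
  rw [filter_filter, ← hw.2.2 k b]
  congr 1
  exact filter_congr fun σ _ => and_iff_right_of_imp fun h => h ▸ hb

lemma IsDecomposition.sum_le_one (hw : IsDecomposition n P w)
    (S : Finset (Equiv.Perm (Fin n))) : ∑ σ ∈ S, w σ ≤ 1 :=
  hw.2.1 ▸ sum_le_sum_of_subset_of_nonneg (subset_univ S) fun σ _ _ => hw.1 σ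

/- Agent `i` does not envy `i'` whenever she gets an object of `insert o B` while `i'` gets one
outside `B`; as both receive the same mass of `B`, this has probability at least `P i o`. -/
theorem envyProb_le_one_sub (rank : Fin n → Equiv.Perm (Fin n)) (hw : IsDecomposition n P w)
    {i i' : Fin n} {B : Finset (Fin n)} {o : Fin n} (ho : o ∉ B)
    (hB : ∀ b ∈ B, ∀ a ∉ B, rank i b < rank i a) (hoB : ∀ a ∉ B, rank i o ≤ rank i a)
    (hPB : ∑ b ∈ B, P i' b = ∑ b ∈ B, P i b) :
    envyProb n rank w i i' ≤ 1 - P i o := by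
  set E := univ.filter fun σ : Equiv.Perm (Fin n) => rank i (σ i') < rank i (σ i)
  set X := univ.filter fun σ : Equiv.Perm (Fin n) => σ i ∈ insert o B
  set N := X.filter fun σ => σ i' ∉ B
  have hX : ∑ σ ∈ X, w σ = P i o + ∑ b ∈ B, P i' b := by
    rw [hw.sum_filter_mem, sum_insert ho, hPB]
  have hXZ : ∑ σ ∈ X.filter (fun σ => σ i' ∈ B), w σ ≤ ∑ b ∈ B, P i' b := by
    rw [← hw.sum_filter_mem]
    exact sum_le_sum_of_subset_of_nonneg (monotone_filter_left _ (subset_univ X))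
      fun σ _ _ => hw.1 σ
  have hsplit := sum_filter_add_sum_filter_not X (fun σ => σ i' ∈ B) w
  have hdisj : Disjoint E N := by
    refine disjoint_left.2 fun σ hσE hσN => ?_
    have henvy := (mem_filter.1 hσE).2
    obtain ⟨hσi, hσi'⟩ := mem_filter.1 hσN
    rcases mem_insert.1 (mem_filter.1 hσi).2 with h | h
    · exact (h ▸ hoB _ hσi').not_gt henvy
    · exact (hB _ h _ hσi').not_gt henvy
  have hEN := hw.sum_le_one (E ∪ N)
  rw [sum_union hdisj] at hEN
  change ∑ σ ∈ E, w σ ≤ 1 - P i o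
  linarith

lemma card_filter_perm_apply_eq (i o : Fin n) :
    n * (univ.filter fun σ : Equiv.Perm (Fin n) => σ i = o).card = n.factorial := by
  have hfiber : ∀ o', (univ.filter fun σ : Equiv.Perm (Fin n) => σ i = o').card =
      (univ.filter fun σ : Equiv.Perm (Fin n) => σ i = o).card := fun o' =>
    card_equiv (Equiv.mulLeft (Equiv.swap o' o)) fun σ => by
      simp [Equiv.swap_apply_eq_iff]
  calc n * (univ.filter fun σ : Equiv.Perm (Fin n) => σ i = o).card
      = ∑ o', (univ.filter fun σ : Equiv.Perm (Fin n) => σ i = o').card := by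
        simp [hfiber]
    _ = n.factorial := by
        rw [← card_eq_sum_card_fiberwise fun σ _ => mem_univ (σ i), card_univ,
          Fintype.card_perm, Fintype.card_fin]

lemma isDecomposition_uniform :
    IsDecomposition n (fun _ _ => 1 / n) (fun _ => (n.factorial : ℝ)⁻¹) := by
  have hfac : (n.factorial : ℝ) ≠ 0 := by positivity
  refine ⟨fun _ => by positivity, ?_, fun i o => ?_⟩
  · simp [card_univ, Fintype.card_perm, hfac]
  · have hn : (n : ℝ) ≠ 0 := by exact_mod_cast i.pos.ne'
    have hcard : (n : ℝ) * (univ.filter fun σ : Equiv.Perm (Fin n) => σ i = o).card =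
        n.factorial := by exact_mod_cast card_filter_perm_apply_eq i o
    rw [sum_const, nsmul_eq_mul]
    field_simp
    linarith

/- Composing with the transposition of `i` and `i'` preserves the uniform distribution and
exchanges the events "`i` envies `i'`" and "`i` does not envy `i'`". -/
lemma envyProb_uniform (rank : Fin n → Equiv.Perm (Fin n)) {i i' : Fin n} (hii : i ≠ i') :
    envyProb n rank (fun _ => (n.factorial : ℝ)⁻¹) i i' = 1 / 2 := by
  set E := univ.filter fun σ : Equiv.Perm (Fin n) => rank i (σ i') < rank i (σ i)
  have hswap : E.card =
      (univ.filter fun σ : Equiv.Perm (Fin n) => ¬ rank i (σ i') < rank i (σ i)).card := by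
    refine card_equiv (Equiv.mulRight (Equiv.swap i i')) fun σ => ?_
    have hne : rank i (σ i) ≠ rank i (σ i') :=
      fun h => hii (σ.injective ((rank i).injective h))
    simp [E, Equiv.swap_apply_left, Equiv.swap_apply_right, hne.symm.le_iff_lt]
  have htotal := card_filter_add_card_filter_not (s := univ)
    fun σ : Equiv.Perm (Fin n) => rank i (σ i') < rank i (σ i)
  rw [card_univ, Fintype.card_perm, Fintype.card_fin, ← hswap] at htotal
  have hfac : (n.factorial : ℝ) ≠ 0 := by positivity
  have hE : (2 : ℝ) * E.card = n.factorial := by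
    exact_mod_cast (two_mul E.card).trans htotal
  rw [envyProb, sum_const, nsmul_eq_mul]
  field_simp
  linarith

end Decomposition

theorem PS.IsCommonPrefix.envyProb_le {n : ℕ} {rank : Fin n → Equiv.Perm (Fin n)}
    {P : Fin n → Fin n → ℝ} {B : Finset (Fin n)} (hB : IsCommonPrefix rank P univ B)
    {w : Equiv.Perm (Fin n) → ℝ} (hw : IsDecomposition n P w) (i i' : Fin n) :
    envyProb n rank w i i' ≤ 1 - 1 / ((n : ℝ) - 1) := by
  obtain ⟨-, hne, htop, hPB, hfav⟩ := hB
  have hnotB : ∀ {a}, a ∉ B → a ∈ univ \ B := fun ha => by simpa using ha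
  calc envyProb n rank w i i' ≤ 1 - P i (fav rank (univ \ B) i) :=
        envyProb_le_one_sub rank hw (mem_sdiff.1 (fav_mem hne i)).2
          (fun b hb a ha => htop i b hb a (hnotB ha)) (fun a ha => fav_le (hnotB ha) i)
          (by rw [sum_congr rfl (hPB i'), sum_congr rfl (hPB i)])
    _ ≤ 1 - 1 / ((n : ℝ) - 1) := by linarith [hfav i]

/-- Proposition 3: for n ≥ 3 agents, the Probabilistic Serial assignment
matrix admits a decomposition such that every agent envies every other agent with
probability at most (n−2)/(n−1). -/
theorem ps_matrix_envy_bounded_decomposition (n : ℕ) (hn : 3 ≤ n)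
    (rank : Fin n → Equiv.Perm (Fin n)) :
    ∃ w : Equiv.Perm (Fin n) → ℝ, IsDecomposition n (psMatrix n rank) w ∧
      ∀ i i' : Fin n, i ≠ i' →
        envyProb n rank w i i' ≤ ((n : ℝ) - 2) / ((n : ℝ) - 1) := by
  have hn' : (3 : ℝ) ≤ n := by exact_mod_cast hn
  have hbound : 1 - 1 / ((n : ℝ) - 1) = (n - 2) / (n - 1) := by
    rw [one_sub_div (by linarith)]
    ring
  rcases PS.psMatrix_eq_uniform_or_isCommonPrefix rank (by omega) with hunif | ⟨B, hB⟩
  · refine ⟨_, hunif ▸ isDecomposition_uniform, fun i i' hii => ?_⟩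
    have h : 1 / ((n : ℝ) - 1) ≤ 1 / 2 := one_div_le_one_div_of_le two_pos (by linarith)
    rw [envyProb_uniform rank hii, ← hbound]
    linarith
  · obtain ⟨w, hw⟩ := exists_isDecomposition (PS.psMatrix_mem_doublyStochastic rank)
    exact ⟨w, hw, fun i i' _ => hbound ▸ hB.envyProb_le hw i i'⟩
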